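/- arXiv:2604.25028 — 4 statements merged into one kernel-verified Lean document; each statement's English description precedes it below -/
import Mathlib

section
/- Let X be a Polish space with its Borel sigma-algebra, and let mu be a finite Borel measure on X. Every analytic subset of X is measurable with respect to the completion of mu (i.e., it is a null-measurable set for mu). -/
/-!
Write the analytic set as the range of a continuous `f : ℕ^ℕ → X`. Cutting the `k`-th coordinate
at a large enough bound loses little outer measure, so bounds `n k` can be chosen one coordinate at
a time such that every `f '' {x | ∀ i < k, x i ≤ n i}` has almost full outer measure. The product
`∏ i, [0, n i]` is compact, and its image contains the intersection of the (measurable) closures of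
these sets; continuity from above then gives compact subsets of the range of almost full outer
measure. A set of finite outer measure with measurable subsets of almost full measure is
null-measurable.
-/

open MeasureTheory Set Filter Topology
open scoped ENNReal

lemma MeasureTheory.exists_measure_iUnion_le_add {α : Type*} [MeasurableSpace α] {μ : Measure α}
    {s : ℕ → Set α} (hs : Monotone s) (hfin : μ (⋃ m, s m) ≠ ∞) {δ : ℝ≥0∞} (hδ : δ ≠ 0) :
    ∃ m, μ (⋃ m, s m) ≤ μ (s m) + δ := by
  have hlim := (tendsto_measure_iUnion_atTop (μ := μ) hs).add_const δ
  obtain ⟨m, hm⟩ := (hlim.eventually (lt_mem_nhds (ENNReal.lt_add_right hfin hδ))).exists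
  exact ⟨m, hm.le⟩

lemma MeasureTheory.NullMeasurableSet.of_forall_exists_subset_le_add {α : Type*}
    [MeasurableSpace α] {μ : Measure α} {s : Set α} (hs : μ s ≠ ∞)
    (h : ∀ ε ≠ 0, ∃ t ⊆ s, MeasurableSet t ∧ μ s ≤ μ t + ε) : NullMeasurableSet s μ := by
  choose t hts ht hle using fun n : ℕ =>
    h (n : ℝ≥0∞)⁻¹ (ENNReal.inv_ne_zero.2 (ENNReal.natCast_ne_top n))
  have hunion : MeasurableSet (⋃ n, t n) := .iUnion ht
  have hge : μ s ≤ μ (⋃ n, t n) := ENNReal.le_of_forall_pos_le_add fun δ hδ _ => by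
    obtain ⟨n, hn⟩ := ENNReal.exists_inv_nat_lt (ENNReal.coe_ne_zero.2 hδ.ne')
    exact (hle n).trans (add_le_add (measure_mono (subset_iUnion t n)) hn.le)
  exact hunion.nullMeasurableSet.congr
    (ae_eq_of_subset_of_measure_ge (iUnion_subset hts) hge hunion.nullMeasurableSet hs)

lemma iInter_closure_image_subset_image {α X ι : Type*} [TopologicalSpace α] [TopologicalSpace X]
    [T2Space X] {f : α → X} (hf : Continuous f) {K : Set α} (hK : IsCompact K) {B : ι → Set α}
    (hB : ∀ U, IsOpen U → K ⊆ U → ∃ i, B i ⊆ U) :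
    ⋂ i, closure (f '' B i) ⊆ f '' K := by
  intro y hy
  by_contra hyK
  obtain ⟨V, W, hV, hW, hyV, hKW, hVW⟩ := SeparatedNhds.of_isCompact_isCompact isCompact_singleton
    (hK.image hf) (disjoint_singleton_left.2 hyK)
  obtain ⟨i, hi⟩ := hB _ (hW.preimage hf) (image_subset_iff.1 hKW)
  have hclosure : closure (f '' B i) ⊆ Vᶜ :=
    closure_minimal ((image_subset_iff.2 hi).trans hVW.subset_compl_left) hV.isClosed_compl
  exact hclosure (mem_iInter.1 hy i) (hyV rfl)

lemma exists_forall_lt_le_subset_of_isOpen {n : ℕ → ℕ} {U : Set (ℕ → ℕ)} (hU : IsOpen U)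
    (hnU : pi univ (fun i => Iic (n i)) ⊆ U) : ∃ k, {x | ∀ i < k, x i ≤ n i} ⊆ U := by
  by_contra! h
  choose z hz hzU using fun k => not_subset.1 (h k)
  have hcompact : IsCompact (pi univ fun i => Iic (n i)) :=
    isCompact_univ_pi fun i => (finite_Iic _).isCompact
  -- Clamping `z k` into the compact box changes none of its first `k` coordinates.
  obtain ⟨a, ha, φ, hφ, hlim⟩ :=
    hcompact.isSeqCompact (x := fun k i => min (z k i) (n i))
      fun k i _ => mem_Iic.2 (min_le_right _ _)
  have hzφ : Tendsto (z ∘ φ) atTop (𝓝 a) := by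
    rw [tendsto_pi_nhds] at hlim ⊢
    intro i
    refine (hlim i).congr' ?_
    filter_upwards [eventually_gt_atTop i] with j hij
    exact min_eq_left (hz (φ j) i (hij.trans_le hφ.le_apply))
  obtain ⟨j, hj⟩ := (hzφ.eventually (hU.mem_nhds (hnU ha))).exists
  exact hzU (φ j) hj

section Capacity

variable {X : Type*} [MeasurableSpace X] (μ : Measure X) [IsFiniteMeasure μ]

lemma exists_forall_measure_range_le_image_add (f : (ℕ → ℕ) → X) {ε : ℝ≥0∞} (hε : ε ≠ 0) :
    ∃ n : ℕ → ℕ, ∀ k, μ (range f) ≤ μ (f '' {x | ∀ i < k, x i ≤ n i}) + ε := by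
  obtain ⟨δ, hδ, hδε⟩ := ENNReal.exists_pos_sum_of_countable hε ℕ
  have step : ∀ (T : Set (ℕ → ℕ)) (k : ℕ),
      ∃ m, μ (f '' T) ≤ μ (f '' (T ∩ {x | x k ≤ m})) + δ k := by
    intro T k
    have hmono : Monotone fun m => f '' (T ∩ {x | x k ≤ m}) := fun m m' hm =>
      image_mono (inter_subset_inter_right _ fun x hx => le_trans hx hm)
    have hunion : ⋃ m, f '' (T ∩ {x | x k ≤ m}) = f '' T := by
      have hcover : ⋃ m, {x : ℕ → ℕ | x k ≤ m} = univ :=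
        iUnion_eq_univ_iff.2 fun x => ⟨x k, show x k ≤ x k from le_rfl⟩
      rw [← image_iUnion, ← inter_iUnion, hcover, inter_univ]
    simpa only [hunion] using exists_measure_iUnion_le_add hmono (hunion ▸ measure_ne_top μ _)
      (ENNReal.coe_ne_zero.2 (hδ k).ne')
  choose M hM using step
  let T : ℕ → Set (ℕ → ℕ) := fun k => Nat.rec univ (fun k Tk => Tk ∩ {x | x k ≤ M Tk k}) k
  have hT : ∀ k, T k = {x | ∀ i < k, x i ≤ M (T i) i} := by
    intro k
    induction k with
    | zero => simp [T]
    | succ k ih =>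
      ext x
      show x ∈ T k ∩ _ ↔ ∀ i < k + 1, _
      rw [Nat.forall_lt_succ_right]
      exact and_congr (Set.ext_iff.1 ih x) Iff.rfl
  have hchain : ∀ k, μ (f '' T 0) ≤ μ (f '' T k) + ∑ i ∈ Finset.range k, (δ i : ℝ≥0∞) := by
    intro k
    induction k with
    | zero => simp
    | succ k ih =>
      calc μ (f '' T 0) ≤ μ (f '' T k) + ∑ i ∈ Finset.range k, (δ i : ℝ≥0∞) := ih
        _ ≤ μ (f '' T (k + 1)) + δ k + ∑ i ∈ Finset.range k, (δ i : ℝ≥0∞) := by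
          gcongr
          exact hM _ k
        _ = μ (f '' T (k + 1)) + ∑ i ∈ Finset.range (k + 1), (δ i : ℝ≥0∞) := by
          rw [Finset.sum_range_succ, add_assoc, add_comm (δ k : ℝ≥0∞)]
  refine ⟨fun k => M (T k) k, fun k => ?_⟩
  calc μ (range f) = μ (f '' T 0) := by rw [← image_univ]; rfl
    _ ≤ μ (f '' T k) + ∑ i ∈ Finset.range k, (δ i : ℝ≥0∞) := hchain k
    _ ≤ μ (f '' T k) + ε := by gcongr; exact (ENNReal.sum_le_tsum _).trans hδε.le
    _ = μ (f '' {x | ∀ i < k, x i ≤ M (T i) i}) + ε := by rw [hT]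

lemma exists_isCompact_subset_range_measure_le_add [TopologicalSpace X] [T2Space X]
    [OpensMeasurableSpace X] {f : (ℕ → ℕ) → X} (hf : Continuous f) {ε : ℝ≥0∞} (hε : ε ≠ 0) :
    ∃ K ⊆ range f, IsCompact K ∧ μ (range f) ≤ μ K + ε := by
  obtain ⟨n, hn⟩ := exists_forall_measure_range_le_image_add μ f hε
  set B : ℕ → Set (ℕ → ℕ) := fun k => {x | ∀ i < k, x i ≤ n i}
  have hBanti : Antitone B := fun k k' hk x hx i hi => hx i (hi.trans_le hk)
  have hclosure : Antitone fun k => closure (f '' B k) := fun k k' hk =>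
    closure_mono (image_mono (hBanti hk))
  have hbox : IsCompact (pi univ fun i => Iic (n i)) :=
    isCompact_univ_pi fun i => (finite_Iic _).isCompact
  refine ⟨f '' pi univ fun i => Iic (n i), image_subset_range _ _, hbox.image hf, ?_⟩
  calc μ (range f) ≤ ⨅ k, (μ (closure (f '' B k)) + ε) :=
        le_iInf fun k => (hn k).trans (by gcongr; exact subset_closure)
    _ = μ (⋂ k, closure (f '' B k)) + ε := by
        rw [← ENNReal.iInf_add, hclosure.measure_iInter
          (fun k => isClosed_closure.measurableSet.nullMeasurableSet) ⟨0, measure_ne_top μ _⟩]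
    _ ≤ μ (f '' pi univ fun i => Iic (n i)) + ε := by
        gcongr
        exact iInter_closure_image_subset_image hf hbox
          fun U hU hnU => exists_forall_lt_le_subset_of_isOpen hU hnU

end Capacity

/-- Every analytic subset of a Polish space is measurable with respect to the
completion of every finite Borel measure, i.e., it is null-measurable. -/
theorem analytic_nullMeasurableSet
    {X : Type*} [TopologicalSpace X] [PolishSpace X]
    [MeasurableSpace X] [BorelSpace X]
    (μ : Measure X) [IsFiniteMeasure μ]
    {s : Set X} (hs : MeasureTheory.AnalyticSet s) :
    NullMeasurableSet s μ := by
  rw [AnalyticSet] at hs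
  rcases hs with rfl | ⟨f, hf, rfl⟩
  · exact nullMeasurableSet_empty
  · refine .of_forall_exists_subset_le_add (measure_ne_top μ _) fun ε hε => ?_
    obtain ⟨K, hKf, hK, hle⟩ := exists_isCompact_subset_range_measure_le_add μ hf hε
    exact ⟨K, hKf, hK.measurableSet, hle⟩
end

section
/- Let X be a Polish space with its Borel sigma-algebra, Theta a standard Borel space, and e : Theta × X → Bool jointly measurable. Then the concept class C = {e(theta, ·) : theta in Theta} satisfies the measurable-target well-behavedness condition WB_meas: for every probability measure mu on X, every measurable target c : X → Bool, every m in N, and every epsilon > 0, the one-sided ghost bad event {(S,T) in X^m × X^m : exists h in C, L_T(h,c) − L_S(h,c) ≥ epsilon/2} is measurable in the completion of the product measure mu^{2m}. -/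
open MeasureTheory

/-- Empirical zero-one error of hypothesis `h` against target `c` on the sample `S`
(with the empty-sample average equal to `0` when `m = 0`). -/
noncomputable def empErr {X : Type*} (h c : X → Bool) (m : ℕ) (S : Fin m → X) : ℝ :=
  ((Finset.univ.filter fun i : Fin m => h (S i) ≠ c (S i)).card : ℝ) / m

/-- One-sided ghost gap: ghost empirical error minus training empirical error. -/
noncomputable def ghostGap {X : Type*} (h c : X → Bool) (m : ℕ)
    (p : (Fin m → X) × (Fin m → X)) : ℝ :=
  empErr h c m p.2 - empErr h c m p.1

/-- One-sided ghost bad event of a concept class. -/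
def badEvent {X : Type*} (C : Set (X → Bool)) (c : X → Bool) (m : ℕ) (ε : ℝ) :
    Set ((Fin m → X) × (Fin m → X)) :=
  {p | ∃ h ∈ C, ghostGap h c m p ≥ ε / 2}

/-- The product measure `μ^{2m}` on `X^m × X^m`. -/
noncomputable def prodMeas {X : Type*} [MeasurableSpace X] (μ : Measure X) (m : ℕ) :
    Measure ((Fin m → X) × (Fin m → X)) :=
  (Measure.pi fun _ : Fin m => μ).prod (Measure.pi fun _ : Fin m => μ)

/-- Measurable-target well-behavedness: every one-sided ghost bad event with a
measurable target is measurable in the completion of every product probability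
measure `μ^{2m}`. -/
def WBmeas {X : Type*} [MeasurableSpace X] (C : Set (X → Bool)) : Prop :=
  ∀ (μ : Measure X), IsProbabilityMeasure μ →
    ∀ c : X → Bool, Measurable c → ∀ m : ℕ, ∀ ε : ℝ, 0 < ε →
      NullMeasurableSet (badEvent C c m ε) (prodMeas μ m)


/-!
The bad event is the projection to `X^m × X^m` of the Borel set
`{(θ, S, T) | L_T(h_θ, c) - L_S(h_θ, c) ≥ ε/2}` of the standard Borel space `Θ × X^m × X^m`,
hence an analytic set, and analytic sets are null-measurable for every finite Borel measure.
For the latter, write the set as `f(ℕ^ℕ)` with `f` continuous. Since outer measure is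
continuous along increasing unions, bounds `σ 0, σ 1, …` can be chosen one at a time so that
the images of `{x | x i ≤ σ i for i < k}` all keep outer measure within `ε` of that of `f(ℕ^ℕ)`.
The intersection of their closures is closed, lies in `f(ℕ^ℕ)` because `∏ i, [0, σ i]` is
compact, and still has measure within `ε`. Letting `ε → 0`, `f(ℕ^ℕ)` contains a Borel set of
the same outer measure.
-/

open Set Filter Topology
open scoped ENNReal

def boundedPrefix (σ : ℕ → ℕ) (k : ℕ) : Set (ℕ → ℕ) := {x | ∀ i < k, x i ≤ σ i}

lemma boundedPrefix_zero (σ : ℕ → ℕ) : boundedPrefix σ 0 = univ := by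
  ext x; simp [boundedPrefix]

lemma boundedPrefix_antitone (σ : ℕ → ℕ) : Antitone (boundedPrefix σ) :=
  fun _ _ hkl _ hx i hi => hx i (hi.trans_le hkl)

lemma boundedPrefix_congr {σ τ : ℕ → ℕ} {k : ℕ} (h : ∀ i < k, σ i = τ i) :
    boundedPrefix σ k = boundedPrefix τ k := by
  ext x
  exact forall₂_congr fun i hi => by rw [h i hi]

lemma monotone_boundedPrefix_update (σ : ℕ → ℕ) (k : ℕ) :
    Monotone fun n => boundedPrefix (Function.update σ k n) (k + 1) := by
  intro n n' hnn x hx i hi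
  rcases eq_or_ne i k with rfl | hik
  · simpa using (by simpa using hx i hi : x i ≤ n).trans hnn
  · simpa [hik] using hx i hi

lemma boundedPrefix_eq_iUnion_update (σ : ℕ → ℕ) (k : ℕ) :
    boundedPrefix σ k = ⋃ n, boundedPrefix (Function.update σ k n) (k + 1) := by
  ext x
  simp only [boundedPrefix, mem_iUnion, mem_ofPred_eq]
  constructor
  · intro hx
    refine ⟨x k, fun i hi => ?_⟩
    rcases (Nat.lt_succ_iff_lt_or_eq.1 hi) with hik | rfl
    · simpa [hik.ne] using hx i hik
    · simp
  · rintro ⟨n, hx⟩ i hi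
    simpa [hi.ne] using hx i (hi.trans k.lt_succ_self)

/-- Dependent choice, one term at a time, for a property `P k` that depends only on the first `k`
terms of a sequence. -/
lemma exists_forall_of_exists_update {P : ℕ → (ℕ → ℕ) → Prop}
    (hP : ∀ k σ τ, (∀ i < k, σ i = τ i) → P k σ → P k τ) {σ₀ : ℕ → ℕ} (h₀ : P 0 σ₀)
    (hstep : ∀ k σ, P k σ → ∃ n, P (k + 1) (Function.update σ k n)) :
    ∃ σ, ∀ k, P k σ := by
  choose next hnext using hstep
  let s : (k : ℕ) → {σ // P k σ} := fun k =>
    Nat.rec ⟨σ₀, h₀⟩ (fun k σ => ⟨_, hnext k σ.1 σ.2⟩) k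
  have hs : ∀ i k, i < k → (s k).1 i = (s (i + 1)).1 i := by
    intro i k hik
    induction k with
    | zero => omega
    | succ k ih =>
      rcases Nat.lt_succ_iff_lt_or_eq.1 hik with hik | rfl
      · change Function.update (s k).1 k _ i = _
        rw [Function.update_of_ne hik.ne, ih hik]
      · rfl
  exact ⟨fun i => (s (i + 1)).1 i, fun k => hP k _ _ (fun i hi => hs i k hi) (s k).2⟩

namespace MeasureTheory

lemma nullMeasurableSet_of_forall_exists_measurableSet_subset {α : Type*} [MeasurableSpace α]
    {μ : Measure α} {s : Set α} (hs : μ s ≠ ∞)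
    (h : ∀ ε ≠ 0, ∃ t ⊆ s, MeasurableSet t ∧ μ s ≤ μ t + ε) : NullMeasurableSet s μ := by
  choose! t hts htm hμt using h
  have hinv (n : ℕ) : (n : ℝ≥0∞)⁻¹ ≠ 0 := ENNReal.inv_ne_zero.2 (ENNReal.natCast_ne_top n)
  let T := ⋃ n : ℕ, t (n : ℝ≥0∞)⁻¹
  have hTs : T ⊆ s := iUnion_subset fun n => hts _ (hinv n)
  have hT : MeasurableSet T := .iUnion fun n => htm _ (hinv n)
  have hμT : μ s ≤ μ T := by
    refine ENNReal.le_of_forall_pos_le_add fun δ hδ _ => ?_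
    obtain ⟨n, hn⟩ := ENNReal.exists_inv_nat_lt (ENNReal.coe_ne_zero.2 hδ.ne')
    calc μ s ≤ μ (t (n : ℝ≥0∞)⁻¹) + (n : ℝ≥0∞)⁻¹ := hμt _ (hinv n)
      _ ≤ μ T + δ := add_le_add (measure_mono (subset_iUnion_of_subset n subset_rfl)) hn.le
  exact hT.nullMeasurableSet.congr
    (ae_eq_of_subset_of_measure_ge hTs hμT hT.nullMeasurableSet hs)

variable {α : Type*} [TopologicalSpace α]

lemma iInter_closure_image_boundedPrefix_subset_range [T2Space α] {f : (ℕ → ℕ) → α}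
    (hf : Continuous f) (σ : ℕ → ℕ) :
    ⋂ k, closure (f '' boundedPrefix σ k) ⊆ range f := by
  intro y hy
  let F : ℕ → Filter (ℕ → ℕ) := fun k => comap f (𝓝 y) ⊓ 𝓟 (boundedPrefix σ k)
  have hF : ∀ k, (F k).NeBot := by
    intro k
    refine inf_principal_neBot_iff.2 fun U ⟨V, hV, hVU⟩ => ?_
    obtain ⟨_, hwV, x, hx, rfl⟩ := mem_closure_iff_nhds.1 (mem_iInter.1 hy k) V hV
    exact ⟨x, hVU hwV, hx⟩
  have : (⨅ k, F k).NeBot := iInf_neBot_of_directed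
    (Antitone.directed_ge fun k l hkl => inf_le_inf_left _
      (principal_mono.2 (boundedPrefix_antitone σ hkl))) hF
  let U := Ultrafilter.of (⨅ k, F k)
  have hU : ∀ k, (U : Filter (ℕ → ℕ)) ≤ F k :=
    fun k => (Ultrafilter.of_le _).trans (iInf_le _ k)
  -- Along `U` the `i`-th coordinate eventually stays in the finite set `[0, σ i]`.
  have hcoord : ∀ i, ∃ n, Tendsto (fun x : ℕ → ℕ => x i) U (𝓝 n) := by
    intro i
    have : Iic (σ i) ∈ U.map fun x : ℕ → ℕ => x i := mem_map.2 <|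
      mem_of_superset (le_principal_iff.1 ((hU (i + 1)).trans inf_le_right))
        fun x hx => hx i i.lt_succ_self
    obtain ⟨n, -, hn⟩ :=
      (finite_Iic (σ i)).isCompact.ultrafilter_le_nhds _ (le_principal_iff.2 this)
    exact ⟨n, hn⟩
  choose g hg using hcoord
  have hfg : Tendsto f U (𝓝 (f g)) := (hf.tendsto g).comp (tendsto_pi_nhds.2 hg)
  exact ⟨g, tendsto_nhds_unique hfg (tendsto_iff_comap.2 ((hU 0).trans inf_le_left))⟩

variable [MeasurableSpace α] [OpensMeasurableSpace α]

lemma exists_isClosed_subset_range_le_measure_add [T2Space α] {f : (ℕ → ℕ) → α}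
    (hf : Continuous f) (μ : Measure α) [IsFiniteMeasure μ] {ε : ℝ≥0∞} (hε : ε ≠ 0) :
    ∃ T, IsClosed T ∧ T ⊆ range f ∧ μ (range f) ≤ μ T + ε := by
  obtain ⟨σ, hσ⟩ : ∃ σ, ∀ k, μ (range f) < μ (f '' boundedPrefix σ k) + ε := by
    refine exists_forall_of_exists_update (σ₀ := 0)
      (fun k σ τ h => by rw [boundedPrefix_congr h]; exact id)
      (by simpa [boundedPrefix_zero] using ENNReal.lt_add_right (measure_ne_top μ _) hε)
      fun k σ hk => ?_
    rw [boundedPrefix_eq_iUnion_update, image_iUnion,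
      Monotone.measure_iUnion fun _ _ h => image_mono (monotone_boundedPrefix_update σ k h),
      ENNReal.iSup_add] at hk
    exact lt_iSup_iff.1 hk
  refine ⟨⋂ k, closure (f '' boundedPrefix σ k), isClosed_iInter fun _ => isClosed_closure,
    iInter_closure_image_boundedPrefix_subset_range hf σ, ?_⟩
  have hanti : Antitone fun k => closure (f '' boundedPrefix σ k) :=
    fun k l h => closure_mono (image_mono (boundedPrefix_antitone σ h))
  rw [hanti.measure_iInter (fun _ => isClosed_closure.measurableSet.nullMeasurableSet)
    ⟨0, measure_ne_top μ _⟩, ← tsub_le_iff_right]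
  refine le_iInf fun k => tsub_le_iff_right.2 ((hσ k).le.trans ?_)
  gcongr
  exact subset_closure

theorem AnalyticSet.nullMeasurableSet [T2Space α] {s : Set α} (hs : AnalyticSet s)
    (μ : Measure α) [IsFiniteMeasure μ] : NullMeasurableSet s μ := by
  rw [AnalyticSet_def] at hs
  rcases hs with rfl | ⟨f, hf, rfl⟩
  · exact nullMeasurableSet_empty
  refine nullMeasurableSet_of_forall_exists_measurableSet_subset (measure_ne_top μ _)
    fun ε hε => ?_
  obtain ⟨T, hTc, hTs, hμT⟩ := exists_isClosed_subset_range_le_measure_add hf μ hε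
  exact ⟨T, hTs, hTc.measurableSet, hμT⟩

end MeasureTheory

lemma badEvent_range_eq_image {X Θ : Type*} (e : Θ × X → Bool) (c : X → Bool) (m : ℕ)
    (ε : ℝ) :
    badEvent (range fun θ x => e (θ, x)) c m ε =
      Prod.snd '' {q : Θ × ((Fin m → X) × (Fin m → X)) |
        ghostGap (fun x => e (q.1, x)) c m q.2 ≥ ε / 2} := by
  ext p
  simp [badEvent]

section GhostGap

variable {X Θ : Type*} [MeasurableSpace X] [MeasurableSpace Θ] {e : Θ × X → Bool} {c : X → Bool}

instance (μ : Measure X) [IsProbabilityMeasure μ] (m : ℕ) :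
    IsProbabilityMeasure (prodMeas μ m) := by
  unfold prodMeas; infer_instance

lemma measurable_empErr (he : Measurable e) (hc : Measurable c) (m : ℕ) :
    Measurable fun q : Θ × (Fin m → X) => empErr (fun x => e (q.1, x)) c m q.2 := by
  refine Measurable.div_const ?_ _
  simp only [Finset.card_filter, Nat.cast_sum, Nat.cast_ite, Nat.cast_one, Nat.cast_zero]
  refine Finset.measurable_sum _ fun i _ => Measurable.ite ?_ measurable_const measurable_const
  have hxi : Measurable fun q : Θ × (Fin m → X) => q.2 i :=
    (measurable_pi_apply i).comp measurable_snd
  exact (measurableSet_eq_fun (he.comp (measurable_fst.prodMk hxi)) (hc.comp hxi)).compl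

lemma measurable_ghostGap (he : Measurable e) (hc : Measurable c) (m : ℕ) :
    Measurable fun q : Θ × ((Fin m → X) × (Fin m → X)) =>
      ghostGap (fun x => e (q.1, x)) c m q.2 := by
  unfold ghostGap
  exact ((measurable_empErr he hc m).comp
      (f := fun q : Θ × ((Fin m → X) × (Fin m → X)) => (q.1, q.2.2))
      (measurable_fst.prodMk measurable_snd.snd)).sub
    ((measurable_empErr he hc m).comp
      (f := fun q : Θ × ((Fin m → X) × (Fin m → X)) => (q.1, q.2.1))
      (measurable_fst.prodMk measurable_snd.fst))

end GhostGap

/-- Borel–analytic bridge: every Borel-parameterized concept class satisfies the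
measurable-target well-behavedness condition `WBmeas`. -/
theorem borel_param_WBmeas
    {X : Type*} [TopologicalSpace X] [PolishSpace X] [MeasurableSpace X] [BorelSpace X]
    {Θ : Type*} [MeasurableSpace Θ] [StandardBorelSpace Θ]
    (e : Θ × X → Bool) (he : Measurable e) :
    WBmeas (Set.range fun θ => fun x => e (θ, x)) := by
  intro μ _ c hc m ε _
  rw [badEvent_range_eq_image]
  exact ((measurable_ghostGap he hc m measurableSet_Ici).analyticSet_image
    measurable_snd).nullMeasurableSet _
end

section
/- If A ⊆ R is analytic but not Borel, then the concept class C_A consisting of the constant-zero function together with the indicator functions of singletons {a} for a in A has the following property: the one-sided ghost bad event for sample size m = 1, target c ≡ 0, and threshold epsilon = 1, namely {(x,y) in R × R : exists h in C_A, (1[h(y) ≠ 0] − 1[h(x) ≠ 0]) ≥ 1/2}, equals {(x,y) : y ∈ A and x ≠ y} and is therefore analytic but not Borel. -/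
/-!
A hypothesis of `C_A` errs on the ghost point `y` but not on the sample point `x` only if it is
`𝟙_{a}` with `y = a ≠ x`, so the bad event is `{(x, y) : y ∈ A, x ≠ y}`. This is the preimage of
`A` under the second projection cut down to the open off-diagonal, hence analytic. Its section
over `x` is `A \ {x}`, and the sections over two distinct points cover `A`, so it is not Borel.
-/

open MeasureTheory

/-- The class `C_A = {0} ∪ {𝟙_{a} : a ∈ A}`. -/
def singletonClass (A : Set ℝ) : Set (ℝ → Bool) :=
  {fun _ => false} ∪ {h | ∃ a ∈ A, h = fun x => decide (x = a)}

/-- Sample size `m = 1`, target `c ≡ 0`, threshold `ε = 1`: `p = (x, y)` is bad when some `h ∈ C`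
has ghost error on `y` exceeding its training error on `x` by at least `ε / 2`. -/
def oneSidedGhostBadEvent {X : Type*} (C : Set (X → Bool)) : Set (X × X) :=
  {p | ∃ h ∈ C, (if h p.2 ≠ false then (1 : ℝ) else 0) -
    (if h p.1 ≠ false then (1 : ℝ) else 0) ≥ 1 / 2}

lemma indicator_sub_indicator_ge_half_iff (b c : Bool) :
    (if b ≠ false then (1 : ℝ) else 0) - (if c ≠ false then (1 : ℝ) else 0) ≥ 1 / 2 ↔
      b = true ∧ c = false := by
  cases b <;> cases c <;> norm_num

lemma mem_oneSidedGhostBadEvent_iff {X : Type*} {C : Set (X → Bool)} {p : X × X} :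
    p ∈ oneSidedGhostBadEvent C ↔ ∃ h ∈ C, h p.2 = true ∧ h p.1 = false := by
  simp only [oneSidedGhostBadEvent, Set.mem_ofPred_eq, indicator_sub_indicator_ge_half_iff]

lemma oneSidedGhostBadEvent_singletonClass (A : Set ℝ) :
    oneSidedGhostBadEvent (singletonClass A) = {p : ℝ × ℝ | p.2 ∈ A ∧ p.1 ≠ p.2} := by
  ext ⟨x, y⟩
  simp only [mem_oneSidedGhostBadEvent_iff, singletonClass, Set.mem_union,
    Set.mem_singleton_iff, Set.mem_ofPred_eq, exists_eq_or_imp, Bool.false_eq_true,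
    false_and, false_or]
  constructor
  · rintro ⟨_, ⟨a, ha, rfl⟩, hy, hx⟩
    simp only [decide_eq_true_eq, decide_eq_false_iff_not] at hy hx
    exact ⟨hy ▸ ha, hy ▸ hx⟩
  · rintro ⟨hy, hxy⟩
    exact ⟨_, ⟨y, hy, rfl⟩, by simpa using hxy⟩

theorem MeasureTheory.AnalyticSet.inter {X : Type*} [TopologicalSpace X] [T2Space X]
    {s t : Set X} (hs : AnalyticSet s) (ht : AnalyticSet t) : AnalyticSet (s ∩ t) := by
  rw [Set.inter_eq_iInter]
  exact AnalyticSet.iInter (Bool.forall_bool.2 ⟨ht, hs⟩)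

theorem analyticSet_snd_mem_and_ne {X : Type*} [TopologicalSpace X] [PolishSpace X]
    {A : Set X} (hA : AnalyticSet A) : AnalyticSet {p : X × X | p.2 ∈ A ∧ p.1 ≠ p.2} := by
  have hoff : AnalyticSet {p : X × X | p.1 ≠ p.2} := by
    simpa [Set.diagonal, Set.compl_def] using
      isClosed_diagonal.isOpen_compl.analyticSet_image continuous_id
  exact (hA.preimage continuous_snd).inter hoff

theorem measurableSet_of_snd_mem_and_ne {X : Type*} [MeasurableSpace X] [Nontrivial X]
    {A : Set X} (h : MeasurableSet {p : X × X | p.2 ∈ A ∧ p.1 ≠ p.2}) : MeasurableSet A := by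
  have hsection (x : X) : MeasurableSet (A \ {x}) := by
    convert h.preimage (measurable_prodMk_left (x := x)) using 1
    ext y
    simp [ne_comm]
  obtain ⟨x₀, x₁, hne⟩ := exists_pair_ne X
  have hA : A = A \ {x₀} ∪ A \ {x₁} := by
    rw [← Set.sdiff_inter, (Set.singleton_inter_eq_empty (s := {x₁})).2 hne, Set.sdiff_empty]
  exact hA ▸ (hsection x₀).union (hsection x₁)

/-- For analytic non-Borel `A`, the one-sided ghost bad event of `C_A` at
`m = 1`, target `c ≡ 0`, threshold `ε = 1`, equals `{(x,y) : y ∈ A ∧ x ≠ y}`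
and is analytic but not Borel. -/
theorem singletonClass_badEvent_analytic_not_borel
    (A : Set ℝ) (hA : MeasureTheory.AnalyticSet A) (hnB : ¬ MeasurableSet A) :
    {p : ℝ × ℝ | ∃ h ∈ singletonClass A,
        (if h p.2 ≠ false then (1 : ℝ) else 0) -
          (if h p.1 ≠ false then (1 : ℝ) else 0) ≥ 1 / 2}
      = {p : ℝ × ℝ | p.2 ∈ A ∧ p.1 ≠ p.2} ∧
    MeasureTheory.AnalyticSet
      {p : ℝ × ℝ | ∃ h ∈ singletonClass A,
        (if h p.2 ≠ false then (1 : ℝ) else 0) -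
          (if h p.1 ≠ false then (1 : ℝ) else 0) ≥ 1 / 2} ∧
    ¬ MeasurableSet
      {p : ℝ × ℝ | ∃ h ∈ singletonClass A,
        (if h p.2 ≠ false then (1 : ℝ) else 0) -
          (if h p.1 ≠ false then (1 : ℝ) else 0) ≥ 1 / 2} := by
  have hbad := oneSidedGhostBadEvent_singletonClass A
  unfold oneSidedGhostBadEvent at hbad
  rw [hbad]
  exact ⟨rfl, analyticSet_snd_mem_and_ne hA, fun h => hnB (measurableSet_of_snd_mem_and_ne h)⟩
end

section
/- The class C_A = {0} ∪ {indicator of {a} : a ∈ A} for an analytic set A ⊆ R is Borel-parameterized: there exist a standard Borel space Theta' and a jointly measurable evaluator e' : Theta' × R → Bool whose range of sections equals C_A. Concretely, if g : Theta → R is a measurable map from a standard Borel space with range A, one may take Theta' = Bool × Theta and e'((b,theta), x) = (b = true ∧ x = g(theta)). -/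
/-!
The section of `e'` at `(b, θ)` is `𝟙_{g θ}` when `b` is true and `0` otherwise, so the sections
range over `C_A` as soon as `Θ` is nonempty. Joint measurability reduces to the measurability of
the graph `{(θ, x) | x = g θ}`, the preimage of the (measurable) diagonal of `ℝ` under
`(θ, x) ↦ (x, g θ)`. If `Θ` is empty then `A = ∅` and a one-point parameter space suffices.
-/

open MeasureTheory

section SingletonEval

variable {Θ α : Type*} [DecidableEq α]

def singletonEval (g : Θ → α) (p : (Bool × Θ) × α) : Bool :=
  p.1.1 && decide (p.2 = g p.1.2)

theorem singletonEval_preimage_true (g : Θ → α) :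
    singletonEval g ⁻¹' {true} = {p | p.1.1 = true} ∩ {p | p.2 = g p.1.2} := by
  ext
  simp [singletonEval]

theorem measurable_singletonEval [MeasurableSpace Θ] [MeasurableSpace α] [MeasurableEq α]
    {g : Θ → α} (hg : Measurable g) : Measurable (singletonEval g) := by
  refine measurable_to_bool ?_
  rw [singletonEval_preimage_true]
  exact (measurable_fst.fst (measurableSet_singleton true)).inter
    (measurableSet_eq_fun measurable_snd (hg.comp measurable_fst.snd))

theorem range_singletonEval_sections [Nonempty Θ] (g : Θ → α) :
    Set.range (fun θ' x => singletonEval g (θ', x)) =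
      insert (fun _ => false) (Set.range fun θ x => decide (x = g θ)) := by
  ext h
  simp [singletonEval, eq_comm]

end SingletonEval

theorem singletonClass_empty : singletonClass ∅ = {fun _ => false} := by
  simp [singletonClass]

theorem singletonClass_range {Θ : Type*} (g : Θ → ℝ) :
    singletonClass (Set.range g) =
      insert (fun _ => false) (Set.range fun θ x => decide (x = g θ)) := by
  simp [singletonClass, Set.range, eq_comm]

/-- `C_A` is Borel-parameterized: given a measurable `g : Θ → ℝ` from a standard
Borel space with range `A`, the evaluator `e'((b, θ), x) = (b = true ∧ x = g θ)`
on `Θ' = Bool × Θ` is jointly measurable and its sections range over `C_A`. -/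
theorem singletonClass_borel_parameterized
    (A : Set ℝ)
    (Θ : Type) [MeasurableSpace Θ] [StandardBorelSpace Θ]
    (g : Θ → ℝ) (hg : Measurable g) (hgA : Set.range g = A) :
    ∃ (Θ' : Type) (_ : MeasurableSpace Θ') (_ : StandardBorelSpace Θ')
      (e' : Θ' × ℝ → Bool), Measurable e' ∧
        (Set.range fun θ' => fun x => e' (θ', x)) = singletonClass A := by
  subst hgA
  rcases isEmpty_or_nonempty Θ with hΘ | hΘ
  · refine ⟨Unit, inferInstance, inferInstance, fun _ => false, measurable_const, ?_⟩
    rw [Set.range_eq_empty g, singletonClass_empty]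
    exact Set.range_const
  · exact ⟨Bool × Θ, inferInstance, inferInstance, singletonEval g,
      measurable_singletonEval hg, by rw [range_singletonEval_sections, singletonClass_range]⟩
end
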